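/- (Maximal bounded by oscillation plus fixed-time norms) For any family of measurable functions (a_M)_{M ∈ ℝ₊^k} on a σ-finite measure space X and any p ∈ [1,∞), one has ‖sup_{M ∈ ℝ₊^k} |a_M|‖_{L^p(X)} ≤ sup_{M ∈ ℝ₊^k} ‖a_M‖_{L^p(X)} + sup_{J ∈ ℤ₊} sup_{I ∈ 𝔖_J(ℝ₊^k)} ‖O²_{I,J}(a_M : M ∈ ℝ₊^k)‖_{L^p(X)}. -/

import Mathlib

open Set MeasureTheory ENNReal NNReal

/-!
Continuity in the parameter lets a supremum over an open set of parameters be computed on a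
countable dense subset, so such suprema are measurable. Exhaust the open orthant by the
increasing cubes `(1/(n+2), n+2)^k`. On a cube with lower corner `L` one has
`|a_M| ≤ |a_L| + sup_{M'} |a_{M'} - a_L|`, and the last term is the oscillation of the one-step
chain `L ≺ U`; Minkowski bounds the cube's maximal function by the right-hand side, and
monotone convergence passes to the whole orthant.
-/

open Filter

theorem ENNReal.iSup_rpow {ι : Sort*} (f : ι → ℝ≥0∞) {y : ℝ} (hy : 0 < y) :
    (⨆ i, f i) ^ y = ⨆ i, f i ^ y :=
  (ENNReal.orderIsoRpow y hy).map_iSup f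

theorem LowerSemicontinuous.biSup_inter_dense {P γ : Type*} [TopologicalSpace P]
    [CompleteLinearOrder γ] [TopologicalSpace γ] {g : P → γ} (hg : LowerSemicontinuous g)
    {D U : Set P} (hD : Dense D) (hU : IsOpen U) :
    ⨆ M ∈ U ∩ D, g M = ⨆ M ∈ U, g M := by
  refine le_antisymm (biSup_mono fun _ => And.left) (iSup₂_le fun M hM => ?_)
  have hclosed := hg.isClosed_preimage (⨆ M ∈ U ∩ D, g M)
  exact closure_minimal (fun N hN => le_iSup₂ (f := fun M _ => g M) N hN) hclosed
    (hD.open_subset_closure_inter hU hM)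

theorem Measurable.biSup_enorm_of_continuous {X P ε : Type*} [MeasurableSpace X]
    [TopologicalSpace P] [TopologicalSpace.SeparableSpace P] [TopologicalSpace ε]
    [ContinuousENorm ε] [MeasurableSpace ε] [OpensMeasurableSpace ε]
    {f : P → X → ε} (hmeas : ∀ M, Measurable (f M)) (hcont : ∀ x, Continuous fun M => f M x)
    {U : Set P} (hU : IsOpen U) :
    Measurable fun x => ⨆ M ∈ U, ‖f M x‖ₑ := by
  obtain ⟨D, hDc, hD⟩ := TopologicalSpace.exists_countable_dense P
  simp_rw [← ((hcont _).enorm.lowerSemicontinuous).biSup_inter_dense hD hU]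
  exact .biSup _ (hDc.mono inter_subset_right) fun M _ => (hmeas M).enorm

theorem eLpNorm'_iSup_of_monotone {X : Type*} [MeasurableSpace X] {μ : Measure X}
    {g : ℕ → X → ℝ≥0∞} (hmeas : ∀ n, Measurable (g n)) (hmono : Monotone g) {p : ℝ}
    (hp : 0 < p) :
    eLpNorm' (fun x => ⨆ n, g n x) p μ = ⨆ n, eLpNorm' (g n) p μ := by
  simp only [eLpNorm', enorm_eq_self, ENNReal.iSup_rpow _ hp]
  rw [lintegral_iSup (fun n => (hmeas n).pow_const p)
    (fun m n h x => rpow_le_rpow (hmono h x) hp.le), ENNReal.iSup_rpow _ (by positivity)]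

/-- The paper's `O²_{I,J}(a)(x)`. -/
noncomputable def twoOscillation {X ι E : Type*} [SeminormedAddCommGroup E]
    (a : (ι → ℝ) → X → E) (J : ℕ) (I : Fin (J + 1) → ι → ℝ) (x : X) : ℝ≥0∞ :=
  (∑ j : Fin J, ⨆ (M : ι → ℝ) (_ : ∀ i, I j.castSucc i ≤ M i ∧ M i < I j.succ i),
    ((‖a M x - a (I j.castSucc) x‖₊ : ℝ≥0∞)) ^ 2) ^ (1 / 2 : ℝ)

theorem twoOscillation_one {X ι E : Type*} [SeminormedAddCommGroup E] (a : (ι → ℝ) → X → E)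
    (I : Fin 2 → ι → ℝ) (x : X) :
    twoOscillation a 1 I x =
      ⨆ (M : ι → ℝ) (_ : ∀ i, I 0 i ≤ M i ∧ M i < I 1 i), ‖a M x - a (I 0) x‖ₑ := by
  have hsq : ∀ y : ℝ≥0∞, (y ^ 2) ^ (1 / 2 : ℝ) = y := fun y => by
    simpa using ENNReal.pow_rpow_inv_natCast two_ne_zero y
  simp only [twoOscillation, Fin.sum_univ_one, ENNReal.iSup_rpow _ one_half_pos, hsq]
  rfl

theorem eLpNorm'_iSup_pi_Ioo_le {X ι E : Type*} [MeasurableSpace X] (μ : Measure X) [Finite ι]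
    [NormedAddCommGroup E] [MeasurableSpace E] [BorelSpace E] [SecondCountableTopology E]
    {p : ℝ} (hp : 1 ≤ p) {a : (ι → ℝ) → X → E} (hmeas : ∀ M, Measurable (a M))
    (hcont : ∀ x, Continuous fun M => a M x) (L U : ι → ℝ) :
    eLpNorm' (fun x => ⨆ M ∈ univ.pi fun i => Ioo (L i) (U i), ‖a M x‖ₑ) p μ ≤
      eLpNorm' (a L) p μ + eLpNorm' (twoOscillation a 1 ![L, U]) p μ := by
  set osc := fun x => ⨆ M ∈ univ.pi fun i => Ioo (L i) (U i), ‖a M x - a L x‖ₑ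
  have hosc : Measurable osc :=
    .biSup_enorm_of_continuous (fun M => (hmeas M).sub (hmeas L))
      (fun x => (hcont x).sub continuous_const) (isOpen_set_pi finite_univ fun _ _ => isOpen_Ioo)
  have htri : ∀ x, ⨆ M ∈ univ.pi fun i => Ioo (L i) (U i), ‖a M x‖ₑ ≤ ‖a L x‖ₑ + osc x := by
    refine fun x => iSup₂_le fun M hM => ?_
    calc ‖a M x‖ₑ ≤ ‖a L x‖ₑ + ‖a M x - a L x‖ₑ := by
          simpa using enorm_add_le (a L x) (a M x - a L x)
      _ ≤ ‖a L x‖ₑ + osc x := by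
          gcongr
          exact le_iSup₂_of_le (f := fun M _ => ‖a M x - a L x‖ₑ) M hM le_rfl
  have hosc_le : ∀ x, osc x ≤ twoOscillation a 1 ![L, U] x := by
    intro x
    rw [twoOscillation_one]
    refine iSup₂_le fun M hM => le_iSup₂_of_le (f := fun M (_ : ∀ i, _) => ‖a M x - a L x‖ₑ) M
      (fun i => ?_) le_rfl
    exact ⟨(hM i trivial).1.le, (hM i trivial).2⟩
  calc _ ≤ eLpNorm' (fun x => ‖a L x‖ₑ + osc x) p μ :=
        eLpNorm'_mono_enorm_ae (by positivity) (.of_forall htri)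
    _ ≤ eLpNorm' (fun x => ‖a L x‖ₑ) p μ + eLpNorm' osc p μ :=
      eLpNorm'_add_le (hmeas L).enorm.aestronglyMeasurable hosc.aestronglyMeasurable hp
    _ ≤ _ := by
      rw [eLpNorm'_enorm]
      gcongr
      exact eLpNorm'_mono_enorm_ae (by positivity) (.of_forall hosc_le)

-- `+ 2` rather than `+ 1` keeps the lower corner strictly below the upper one already at `n = 0`.
def posCube (ι : Type*) (n : ℕ) : Set (ι → ℝ) :=
  univ.pi fun _ => Ioo ((n + 2 : ℝ)⁻¹) (n + 2)

theorem isOpen_posCube {ι : Type*} [Finite ι] (n : ℕ) : IsOpen (posCube ι n) :=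
  isOpen_set_pi finite_univ fun _ _ => isOpen_Ioo

theorem monotone_posCube (ι : Type*) : Monotone (posCube ι) := by
  intro m n hmn
  have hmn' : (m + 2 : ℝ) ≤ n + 2 := by gcongr
  exact pi_mono fun _ _ => Ioo_subset_Ioo (by gcongr) hmn'

theorem iUnion_posCube (ι : Type*) [Finite ι] : ⋃ n, posCube ι n = {M | ∀ i, 0 < M i} := by
  ext M
  simp only [mem_iUnion, posCube, mem_univ_pi, mem_Ioo]
  constructor
  · rintro ⟨n, hn⟩ i
    exact (inv_pos.2 (by positivity)).trans (hn i).1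
  · intro hM
    have hup : Tendsto (fun n : ℕ => (n + 2 : ℝ)) atTop atTop :=
      tendsto_atTop_add_const_right _ _ tendsto_natCast_atTop_atTop
    have hlow := tendsto_inv_atTop_zero.comp hup
    exact (eventually_all.2 fun i =>
      (hlow.eventually (gt_mem_nhds (hM i))).and (hup.eventually_gt_atTop (M i))).exists

theorem stmt16 {X : Type*} [MeasurableSpace X] (μ : MeasureTheory.Measure X)
    (k : ℕ) (p : ℝ) (hp : 1 ≤ p)
    (a : (Fin k → ℝ) → X → ℂ)
    (hmeas : ∀ M, Measurable (a M))
    (hcont : ∀ x, Continuous fun M => a M x) :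
    (∫⁻ x, (⨆ (M : Fin k → ℝ) (_ : ∀ i, 0 < M i), ((‖a M x‖₊ : ℝ≥0∞))) ^ p ∂μ) ^ (1 / p) ≤
      (⨆ (M : Fin k → ℝ) (_ : ∀ i, 0 < M i),
        (∫⁻ x, ((‖a M x‖₊ : ℝ≥0∞)) ^ p ∂μ) ^ (1 / p)) +
      ⨆ (J : ℕ) (I : Fin (J + 1) → Fin k → ℝ)
        (_ : ∀ (j : Fin (J + 1)) (i : Fin k), 0 < I j i)
        (_ : ∀ (j : Fin J) (i : Fin k), I j.castSucc i < I j.succ i),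
        (∫⁻ x,
          ((∑ j : Fin J,
            ⨆ (M : Fin k → ℝ) (_ : ∀ i, I j.castSucc i ≤ M i ∧ M i < I j.succ i),
              ((‖a M x - a (I j.castSucc) x‖₊ : ℝ≥0∞)) ^ 2) ^ (1 / 2 : ℝ)) ^ p ∂μ)
          ^ (1 / p) := by
  change eLpNorm' (fun x => ⨆ M ∈ {M : Fin k → ℝ | ∀ i, 0 < M i}, ‖a M x‖ₑ) p μ ≤
    (⨆ (M : Fin k → ℝ) (_ : ∀ i, 0 < M i), eLpNorm' (a M) p μ) +
      ⨆ (J : ℕ) (I : Fin (J + 1) → Fin k → ℝ) (_ : ∀ j i, 0 < I j i)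
        (_ : ∀ (j : Fin J) i, I j.castSucc i < I j.succ i), eLpNorm' (twoOscillation a J I) p μ
  simp_rw [← iUnion_posCube, iSup_iUnion]
  rw [eLpNorm'_iSup_of_monotone
    (fun n => Measurable.biSup_enorm_of_continuous hmeas hcont (isOpen_posCube n))
    (fun m n h x => biSup_mono fun M hM => monotone_posCube _ h hM) (one_pos.trans_le hp)]
  refine iSup_le fun n => ?_
  let L : Fin k → ℝ := fun _ => ((n : ℝ) + 2)⁻¹
  let U : Fin k → ℝ := fun _ => (n : ℝ) + 2
  have hL : ∀ i, 0 < L i := fun _ => by positivity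
  have hLU : ∀ i, L i < U i := fun _ =>
    have h : (1 : ℝ) < n + 2 := by linarith [n.cast_nonneg (α := ℝ)]
    (inv_lt_one_of_one_lt₀ h).trans h
  have hchain_pos : ∀ j i, 0 < ![L, U] j i :=
    Fin.forall_fin_two.2 ⟨hL, fun i => (hL i).trans (hLU i)⟩
  have hchain_lt : ∀ (j : Fin 1) i, ![L, U] j.castSucc i < ![L, U] j.succ i :=
    Fin.forall_fin_one.2 hLU
  calc _ ≤ eLpNorm' (a L) p μ + eLpNorm' (twoOscillation a 1 ![L, U]) p μ :=
        eLpNorm'_iSup_pi_Ioo_le μ hp hmeas hcont L U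
    _ ≤ _ := by
        refine add_le_add (le_iSup₂_of_le L hL le_rfl) (le_iSup₂_of_le 1 ![L, U] ?_)
        exact le_iSup₂_of_le hchain_pos hchain_lt le_rfl
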